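/- Let (Ω, μ) be a probability measure space, let Z and B be measurable events with μ(Z) > 0 and μ(B) > 0, and let (A_k)_{k ∈ K} be a finite measurable partition of Ω with μ(A_k) > 0 for every k. Assume that for each k, the events B and Z are conditionally independent given A_k, i.e. μ(B ∩ Z ∩ A_k) * μ(A_k) = μ(B ∩ A_k) * μ(Z ∩ A_k). Let ε ≥ 0 and assume the output event Z is ε-adversarially private with respect to the partition, i.e. μ(A_k | Z) ≤ exp(ε) * μ(A_k) for every k ∈ K. Then μ(B | Z) ≤ exp(ε) * μ(B), i.e. μ(B | Z)/μ(B) ≤ e^ε, where μ(E | F) denotes μ(E ∩ F)/μ(F). -/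
import Mathlib


open MeasureTheory

theorem stmt_2 {Ω : Type*} [MeasurableSpace Ω] (μ : Measure Ω)
    [IsProbabilityMeasure μ]
    {K : Type*} [Fintype K]
    (Z B : Set Ω) (hZm : MeasurableSet Z) (hBm : MeasurableSet B)
    (hZpos : 0 < μ Z) (hBpos : 0 < μ B)
    (A : K → Set Ω) (hAm : ∀ k, MeasurableSet (A k))
    (hdisj : Pairwise (Function.onFun Disjoint A))
    (hcover : (⋃ k, A k) = Set.univ)
    (hApos : ∀ k, 0 < μ (A k))
    (hcondindep : ∀ k, μ (B ∩ Z ∩ A k) * μ (A k) = μ (B ∩ A k) * μ (Z ∩ A k))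
    (ε : ℝ) (hε : 0 ≤ ε)
    (hpriv : ∀ k, (μ (A k ∩ Z)).toReal / (μ Z).toReal ≤
      Real.exp ε * (μ (A k)).toReal) :
    (μ (B ∩ Z)).toReal / (μ Z).toReal ≤ Real.exp ε * (μ B).toReal := by
  have hfin : ∀ s : Set Ω, μ s ≠ ⊤ := fun s => measure_ne_top μ s
  have hZr : 0 < (μ Z).toReal := ENNReal.toReal_pos hZpos.ne' (hfin Z)
  have hAr : ∀ k, 0 < (μ (A k)).toReal := fun k =>
    ENNReal.toReal_pos (hApos k).ne' (hfin _)
  have hdecomp : ∀ S : Set Ω, MeasurableSet S →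
      (μ S).toReal = ∑ k, (μ (S ∩ A k)).toReal := by
    intro S hS
    have h1 : S = ⋃ k, S ∩ A k := by
      rw [← Set.inter_iUnion, hcover, Set.inter_univ]
    rw [show μ S = μ (⋃ k, S ∩ A k) from by rw [← h1],
      measure_iUnion
        (fun i j hij => (hdisj hij).mono Set.inter_subset_right Set.inter_subset_right)
        (fun k => hS.inter (hAm k)), tsum_fintype]
    exact ENNReal.toReal_sum fun k _ => hfin _
  have key : ∀ k, (μ (B ∩ Z ∩ A k)).toReal / (μ Z).toReal ≤
      Real.exp ε * (μ (B ∩ A k)).toReal := by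
    intro k
    have hci := congrArg ENNReal.toReal (hcondindep k)
    rw [ENNReal.toReal_mul, ENNReal.toReal_mul, Set.inter_comm Z (A k)] at hci
    set x := (μ (B ∩ Z ∩ A k)).toReal with hx
    set a := (μ (A k)).toReal with ha
    set b := (μ (B ∩ A k)).toReal with hb
    set c := (μ (A k ∩ Z)).toReal with hc
    have hb0 : 0 ≤ b := ENNReal.toReal_nonneg
    have hc0 : 0 ≤ c := ENNReal.toReal_nonneg
    have h1 : x = b * c / a := by
      rw [eq_div_iff (hAr k).ne']
      linarith [hci]
    have hcle : c ≤ Real.exp ε * a * (μ Z).toReal :=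
      (div_le_iff₀ hZr).mp (hpriv k)
    rw [h1, div_div, div_le_iff₀ (mul_pos (hAr k) hZr)]
    nlinarith [mul_le_mul_of_nonneg_left hcle hb0]
  rw [hdecomp (B ∩ Z) (hBm.inter hZm), hdecomp B hBm, Finset.sum_div,
    Finset.mul_sum]
  exact Finset.sum_le_sum fun k _ => key k
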